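/- arXiv:1502.00357 — 3 statements merged into one kernel-verified Lean document; each statement's English description precedes it below -/
import Mathlib

section
/- (Cycles) Let f : {0,1}^n → {0,1} be a Boolean function and let i, j, k ∈ [n] be pairwise distinct indices. Suppose there are bits b_j, b_k ∈ {0,1} such that j ∈ U(f_{i0}), i ∈ U(f_{j b_j}), k ∈ U(f_{i1}), and i ∈ U(f_{k b_k}). Then all three variables i, j, k are useless for f, i.e., {i, j, k} ⊆ U(f). -/
/-!
A cycle `j ∈ U(f_{ib})`, `i ∈ U(f_{jc})` trades `x_i = b` for `x_i = ¬b` at the price of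
fixing `x_j = c`: `f(x_i = b) = f(x_i = ¬b, x_j = c)`. Using both cycles, and that `x_j` is free
once `x_i = 0`,
`f(x_i = 1) = f(x_i = 0, x_k = b_k) = f(x_i = 0, x_j = b_j, x_k = b_k) = f(x_i = 1, x_j = b_j)
= f(x_i = 0)`,
so `i` is useless for `f`. Then `f` agrees with `f_{i0}` and with `f_{i1}`, which makes `j` and `k`
useless for `f`.
-/

/-- `f` depends on variable `i`: flipping the `i`-th coordinate of some input changes the value. -/
def DependsOnVar {ι : Type*} [DecidableEq ι] (f : (ι → Bool) → Bool) (i : ι) : Prop :=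
  ∃ a : ι → Bool, f (Function.update a i (!a i)) ≠ f a

/-- The restriction `f|_{x_j = b}`, a Boolean function on the remaining variables. -/
def restrictBit {ι : Type*} [DecidableEq ι] (f : (ι → Bool) → Bool) (j : ι) (b : Bool) :
    ({i : ι // i ≠ j} → Bool) → Bool :=
  fun y => f (fun i => if h : i = j then b else y ⟨i, h⟩)

/-- `k ∈ U(f_{jb})`: variable `k` (a variable of `f_{jb}`, i.e. `k ≠ j`) is useless for the
restriction `f_{jb}`. -/
def UselessIn {ι : Type*} [DecidableEq ι] (f : (ι → Bool) → Bool) (j : ι) (b : Bool)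
    (k : ι) : Prop :=
  ∃ h : k ≠ j, ¬ DependsOnVar (restrictBit f j b) ⟨k, h⟩

open Function

variable {ι : Type*} [DecidableEq ι] {f : (ι → Bool) → Bool}

theorem not_dependsOnVar_iff_forall_update {i : ι} :
    ¬ DependsOnVar f i ↔ ∀ a c, f (update a i c) = f a := by
  refine ⟨fun h a c => ?_, fun h ⟨a, ha⟩ => ha (h a _)⟩
  by_cases hc : c = a i
  · rw [hc, update_eq_self]
  · rw [Bool.eq_not.mpr hc]
    exact not_not.mp fun ha => h ⟨a, ha⟩

theorem not_dependsOnVar_of_update_true_eq_false {i : ι}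
    (h : ∀ a, f (update a i true) = f (update a i false)) : ¬ DependsOnVar f i := by
  refine not_dependsOnVar_iff_forall_update.mpr fun a c => ?_
  conv_rhs => rw [← update_eq_self i a]
  cases c <;> cases a i <;> simp [h]

theorem restrictBit_comp_val {j : ι} {b : Bool} {a : ι → Bool} (ha : a j = b) :
    restrictBit f j b (a ∘ Subtype.val) = f a := by
  unfold restrictBit
  congr 1
  funext p
  split_ifs with hp
  · exact hp ▸ ha.symm
  · rfl

theorem UselessIn.apply_update {j k : ι} {b : Bool} (h : UselessIn f j b k) {a : ι → Bool}
    (ha : a j = b) (c : Bool) : f (update a k c) = f a := by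
  obtain ⟨hkj, hk⟩ := h
  calc f (update a k c) = restrictBit f j b (update a k c ∘ Subtype.val) :=
        (restrictBit_comp_val (by rwa [update_of_ne hkj.symm])).symm
    _ = restrictBit f j b (update (a ∘ Subtype.val) ⟨k, hkj⟩ c) := 
        congrArg _ (update_comp_eq_of_injective a Subtype.val_injective ⟨k, hkj⟩ c)
    _ = restrictBit f j b (a ∘ Subtype.val) := not_dependsOnVar_iff_forall_update.mp hk _ c
    _ = f a := restrictBit_comp_val ha

theorem UselessIn.apply_update_eq_of_swap {i j : ι} {b c : Bool} (hj : UselessIn f i b j)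
    (hi : UselessIn f j c i) (a : ι → Bool) :
    f (update a i b) = f (update (update a i !b) j c) := by
  calc f (update a i b) = f (update (update a i b) j c) :=
        (hj.apply_update (update_self i b a) c).symm
    _ = f (update (update (update a i b) j c) i !b) :=
        (hi.apply_update (update_self j c (update a i b)) _).symm
    _ = f (update (update a i !b) j c) := by rw [update_comm hj.1, update_idem]

theorem not_dependsOnVar_of_two_cycles {i j k : ι} (hjk : j ≠ k) {bj bk : Bool}
    (h1 : UselessIn f i false j) (h2 : UselessIn f j bj i)
    (h3 : UselessIn f i true k) (h4 : UselessIn f k bk i) : ¬ DependsOnVar f i := by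
  refine not_dependsOnVar_of_update_true_eq_false fun a => ?_
  calc f (update a i true) = f (update (update a i false) k bk) :=
        h3.apply_update_eq_of_swap h4 a
    _ = f (update (update (update a i false) k bk) j bj) :=
        (h1.apply_update (by rw [update_of_ne h3.1.symm, update_self]) bj).symm
    _ = f (update (update (update a j bj) i false) k bk) := by
        rw [update_comm hjk.symm, update_comm h2.1]
    _ = f (update (update a i true) j bj) := by
        rw [update_comm h2.1]
        exact (h3.apply_update_eq_of_swap h4 _).symm
    _ = f (update a i false) := (h1.apply_update_eq_of_swap h2 a).symm

theorem not_dependsOnVar_of_uselessIn {i j : ι} {b : Bool} (hi : ¬ DependsOnVar f i)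
    (h : UselessIn f i b j) : ¬ DependsOnVar f j := by
  rw [not_dependsOnVar_iff_forall_update] at hi ⊢
  intro a c
  calc f (update a j c) = f (update (update a j c) i b) := (hi _ b).symm
    _ = f (update (update a i b) j c) := by rw [update_comm h.1]
    _ = f (update a i b) := h.apply_update (update_self i b a) c
    _ = f a := hi a b

theorem useless_of_two_cycles_general (n : ℕ) (f : (Fin n → Bool) → Bool) (i j k : Fin n)
    (hjk : j ≠ k) (bj bk : Bool)
    (h1 : UselessIn f i false j) (h2 : UselessIn f j bj i)
    (h3 : UselessIn f i true k) (h4 : UselessIn f k bk i) :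
    ¬ DependsOnVar f i ∧ ¬ DependsOnVar f j ∧ ¬ DependsOnVar f k := by
  have hi := not_dependsOnVar_of_two_cycles hjk h1 h2 h3 h4
  exact ⟨hi, not_dependsOnVar_of_uselessIn hi h1, not_dependsOnVar_of_uselessIn hi h3⟩

/-- Cycles: for pairwise distinct `i, j, k`, if `j ∈ U(f_{i0})`, `i ∈ U(f_{j b_j})`,
`k ∈ U(f_{i1})` and `i ∈ U(f_{k b_k})`, then all three variables are useless for `f`. -/
theorem useless_of_two_cycles (n : ℕ) (f : (Fin n → Bool) → Bool) (i j k : Fin n)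
    (hij : i ≠ j) (hik : i ≠ k) (hjk : j ≠ k) (bj bk : Bool)
    (h1 : UselessIn f i false j) (h2 : UselessIn f j bj i)
    (h3 : UselessIn f i true k) (h4 : UselessIn f k bk i) :
    ¬ DependsOnVar f i ∧ ¬ DependsOnVar f j ∧ ¬ DependsOnVar f k :=
  useless_of_two_cycles_general n f i j k hjk bj bk h1 h2 h3 h4
end

section
/- (Main Claim) Let f : {0,1}^n → {0,1} be a Boolean function such that for every i ∈ [n], both U(f_{i0}) ≠ ∅ and U(f_{i1}) ≠ ∅. Let S ⊆ [n] satisfy |S| ≥ 2 and U1(f, S) ⊆ S. Then there exists j ∈ S such that variable j is useless for f (i.e., f_{j0} = f_{j1}). -/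
/-- `U(f_{ib})` as a set of indices in `[n]`. -/
def Uset {n : ℕ} (f : (Fin n → Bool) → Bool) (i : Fin n) (b : Bool) : Set (Fin n) :=
  {k | UselessIn f i b k}

/-- `U1(f, S) = ⋃_{j ∈ S} (U(f_{j0}) ∪ U(f_{j1}))`. -/
def U1 {n : ℕ} (f : (Fin n → Bool) → Bool) (S : Set (Fin n)) : Set (Fin n) :=
  ⋃ j ∈ S, (Uset f j false ∪ Uset f j true)

open Function

section FlipInvariance

variable {ι : Type*} [DecidableEq ι]

def FlipInvariantOn (f : (ι → Bool) → Bool) (i : ι) (b : Bool) (k : ι) : Prop :=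
  ∀ a : ι → Bool, a i = b → f (update a k (!a k)) = f a

lemma restrictBit_apply_val {f : (ι → Bool) → Bool} {i : ι} {b : Bool} {a : ι → Bool}
    (ha : a i = b) : restrictBit f i b (fun l => a l) = f a := by
  unfold restrictBit
  congr 1
  funext l
  split_ifs with h
  · rw [h, ha]
  · rfl

lemma uselessIn_iff {f : (ι → Bool) → Bool} {i : ι} {b : Bool} {k : ι} :
    UselessIn f i b k ↔ k ≠ i ∧ FlipInvariantOn f i b k := by
  have hval : Injective (Subtype.val : {l : ι // l ≠ i} → ι) := Subtype.val_injective
  unfold UselessIn DependsOnVar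
  refine ⟨fun ⟨hki, hdep⟩ => ⟨hki, fun a ha => ?_⟩, fun ⟨hki, hflip⟩ => ⟨hki, ?_⟩⟩
  · have hua : update a k (!a k) i = b := by rwa [update_of_ne hki.symm]
    rw [← restrictBit_apply_val (f := f) ha, ← restrictBit_apply_val (f := f) hua,
      update_comp_eq_of_injective' _ hval ⟨k, hki⟩]
    by_contra hne
    exact hdep ⟨fun l => a l, hne⟩
  · rintro ⟨y, hy⟩
    set a : ι → Bool := fun l => if h : l = i then b else y ⟨l, h⟩
    have ha : a i = b := dif_pos rfl
    have hay : (fun l : {l // l ≠ i} => a l) = y := funext fun l => dif_neg l.2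
    have hak : a k = y ⟨k, hki⟩ := dif_neg hki
    have hua : update a k (!a k) i = b := by rwa [update_of_ne hki.symm]
    have := hflip a ha
    rw [← restrictBit_apply_val (f := f) ha, ← restrictBit_apply_val (f := f) hua,
      update_comp_eq_of_injective' _ hval ⟨k, hki⟩, hay, hak] at this
    exact hy this

lemma restrictBit_eq_of_forall_flip {f : (ι → Bool) → Bool} {k : ι}
    (h : ∀ a : ι → Bool, f (update a k (!a k)) = f a) :
    restrictBit f k false = restrictBit f k true := by
  funext y
  set a : ι → Bool := fun l => if h : l = k then false else y ⟨l, h⟩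
  have hflip : update a k (!a k) = fun l => if h : l = k then true else y ⟨l, h⟩ := by
    funext l
    by_cases hl : l = k <;> simp [a, hl]
  exact (h a).symm.trans (congrArg f hflip)

lemma FlipInvariantOn.trans {f : (ι → Bool) → Bool} {i j k : ι} {b c : Bool}
    (hk : FlipInvariantOn f i c k) (hi : FlipInvariantOn f j b i) (hki : k ≠ i) (hjk : j ≠ k) :
    FlipInvariantOn f j b k := by
  intro a ha
  by_cases hai : a i = c
  · exact hk a hai
  set a' := update a i (!a i)
  have ha'i : a' i = c := by cases c <;> simp_all [a']
  have hswap : update a' k (!a' k) = update (update a k (!a k)) i (!update a k (!a k) i) := by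
    rw [show a' k = a k from update_of_ne hki _ _, update_of_ne hki.symm]
    exact update_comm hki.symm _ _ _
  calc f (update a k (!a k))
      = f (update (update a k (!a k)) i (!update a k (!a k) i)) :=
        (hi _ (by rwa [update_of_ne hjk])).symm
    _ = f (update a' k (!a' k)) := by rw [hswap]
    _ = f a' := hk a' ha'i
    _ = f a := hi a ha

lemma UselessIn.trans {f : (ι → Bool) → Bool} {i j k : ι} {b c : Bool}
    (hk : UselessIn f i c k) (hi : UselessIn f j b i) (hkj : k ≠ j) : UselessIn f j b k := by
  rw [uselessIn_iff] at *
  exact ⟨hkj, hk.2.trans hi.2 hk.1 hkj.symm⟩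

lemma exists_not_uselessIn {f : (ι → Bool) → Bool} {i j : ι}
    (hj : restrictBit f j false ≠ restrictBit f j true) :
    ∃ c, ¬ UselessIn f i c j := by
  by_contra! h
  obtain ⟨-, h₀⟩ := uselessIn_iff.mp (h false)
  obtain ⟨-, h₁⟩ := uselessIn_iff.mp (h true)
  refine hj (restrictBit_eq_of_forall_flip fun a => ?_)
  cases hai : a i
  · exact h₀ a hai
  · exact h₁ a hai

end FlipInvariance

lemma exists_uset_ssubset {n : ℕ} {f : (Fin n → Bool) → Bool} {i j : Fin n} {b : Bool}
    (hj : restrictBit f j false ≠ restrictBit f j true) (hi : i ∈ Uset f j b) :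
    ∃ c, Uset f i c ⊂ Uset f j b := by
  obtain ⟨c, hc⟩ := exists_not_uselessIn (i := i) hj
  refine ⟨c, Set.ssubset_iff_of_subset (fun k hk => ?_) |>.mpr ⟨i, hi, fun hii => hii.1 rfl⟩⟩
  exact UselessIn.trans hk hi fun hkj => hc (hkj ▸ hk)

/-- Main Claim: if every one-variable restriction of `f` has a useless variable, and
`S ⊆ [n]` with `|S| ≥ 2` satisfies `U1(f, S) ⊆ S`, then some `j ∈ S` is useless for `f`,
i.e. `f_{j0} = f_{j1}`. -/
theorem main_claim (n : ℕ) (f : (Fin n → Bool) → Bool)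
    (hne : ∀ (i : Fin n) (b : Bool), (Uset f i b).Nonempty)
    (S : Finset (Fin n)) (hS : 2 ≤ S.card) (hcl : U1 f ↑S ⊆ ↑S) :
    ∃ j ∈ S, restrictBit f j false = restrictBit f j true := by
  by_contra! huse
  have huset_ne : ∀ T : Set (Fin n), ∀ j ∈ S, ∀ b, Uset f j b ≠ T := by
    intro T
    induction T using WellFoundedLT.induction with
    | _ T ih =>
      rintro j hj b rfl
      obtain ⟨i, hi⟩ := hne j b
      have hiS : i ∈ S := hcl (Set.mem_biUnion hj (by cases b <;> simp [hi]))
      obtain ⟨c, hc⟩ := exists_uset_ssubset (huse j hj) hi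
      exact ih _ hc i hiS c rfl
  obtain ⟨j, hj⟩ := Finset.card_pos.mp (by omega : 0 < S.card)
  exact huset_ne _ j hj false rfl
end

section
/- For each n, let k = k(n) = ⌊log₂ n⌋ − 1, and for a Boolean function f : {0,1}^n → {0,1} say that f has a good restriction if there exists a set I ⊆ [n] with |[n]∖I| = k and an assignment ρ : I → {0,1} such that the subfunction f|_ρ on the k free variables is symmetric and depends on all k of those variables. Then the fraction of functions f : {0,1}^n → {0,1} (out of all 2^{2^n} such functions) that have a good restriction tends to 1 as n → ∞. -/
/-- `g` depends on variable `i`: flipping the `i`-th coordinate of some input changes the value. -/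
def BoolDependsOn {ι : Type*} [DecidableEq ι] (g : (ι → Bool) → Bool) (i : ι) : Prop :=
  ∃ a : ι → Bool, g (Function.update a i (!a i)) ≠ g a

/-- A Boolean function on a subtype of coordinates is symmetric: invariant under all
permutations of its input coordinates. -/
def SymmFunOn {ι : Type*} (g : (ι → Bool) → Bool) : Prop :=
  ∀ (σ : Equiv.Perm ι) (x : ι → Bool), g (x ∘ σ) = g x

/-- The subfunction `f|_ρ` obtained by fixing each variable `x_i` with `i ∈ I` to `ρ i`,
as a Boolean function on the free variables indexed by `[n] \ I`. -/
def restrictSet {n : ℕ} (f : (Fin n → Bool) → Bool) (I : Finset (Fin n)) (ρ : Fin n → Bool) :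
    ({j : Fin n // j ∉ I} → Bool) → Bool :=
  fun y => f (fun j => if h : j ∈ I then ρ j else y ⟨j, h⟩)

/-- `f` has a good restriction: a restriction leaving `k = ⌊log₂ n⌋ - 1` variables free whose
subfunction is symmetric and depends on all `k` free variables. -/
def HasGoodRestriction (n : ℕ) (f : (Fin n → Bool) → Bool) : Prop :=
  ∃ (I : Finset (Fin n)) (ρ : Fin n → Bool),
    (Finset.univ \ I).card = Nat.log 2 n - 1 ∧
    SymmFunOn (restrictSet f I ρ) ∧
    ∀ j : {j : Fin n // j ∉ I}, BoolDependsOn (restrictSet f I ρ) j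

/-!
Fix any `k` free variables. As `ρ` ranges over the `2 ^ (n - k)` assignments of the other
variables, the subfunctions `f|_ρ` determine `f` and can be chosen independently, while among the
`A = 2 ^ 2 ^ k` functions of `k` variables at least two (OR and its negation) are symmetric and
depend on every variable. So at most a fraction `(1 - 2 / A) ^ 2 ^ (n - k)` of all `f` has no good
restriction. Since `2 ^ (k + 1) ≤ n`, the exponent is `A` times `2 ^ (n - k - 2 ^ k) ≥ 2 ^ k`,
and `(1 - 2 / A) ^ A ≤ e⁻²` makes this fraction at most `e ^ (-2 k)`.
-/

open Filter Topology

def IsSymmNondegenerate {ι : Type*} [DecidableEq ι] (g : (ι → Bool) → Bool) : Prop :=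
  SymmFunOn g ∧ ∀ i, BoolDependsOn g i

section BooleanFunction

variable {ι : Type*}

theorem SymmFunOn.not {g : (ι → Bool) → Bool} (h : SymmFunOn g) : SymmFunOn fun y => !g y :=
  fun σ x => congrArg (!·) (h σ x)

def anyTrue [Fintype ι] (y : ι → Bool) : Bool :=
  decide (∃ i, y i = true)

theorem symmFunOn_anyTrue [Fintype ι] : SymmFunOn (anyTrue (ι := ι)) := by
  intro σ x
  simp only [anyTrue, Function.comp_apply, decide_eq_decide]
  exact (σ.surjective.exists (p := fun i => x i = true)).symm

variable [DecidableEq ι]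

theorem BoolDependsOn.not {g : (ι → Bool) → Bool} {i : ι} (h : BoolDependsOn g i) :
    BoolDependsOn (fun y => !g y) i := by
  obtain ⟨a, ha⟩ := h
  exact ⟨a, by simpa using ha⟩

variable [Fintype ι]

theorem boolDependsOn_anyTrue (i : ι) : BoolDependsOn anyTrue i :=
  ⟨fun _ => false, by simpa [anyTrue] using ⟨i, by simp⟩⟩

theorem two_le_card_isSymmNondegenerate :
    2 ≤ Nat.card {g : (ι → Bool) → Bool // IsSymmNondegenerate g} := by
  have hany : IsSymmNondegenerate (anyTrue (ι := ι)) :=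
    ⟨symmFunOn_anyTrue, boolDependsOn_anyTrue⟩
  have hnot : IsSymmNondegenerate fun y => !anyTrue y := ⟨hany.1.not, fun i => (hany.2 i).not⟩
  have hne : (⟨anyTrue, hany⟩ : {g // IsSymmNondegenerate g}) ≠ ⟨_, hnot⟩ := fun h => by
    simpa [anyTrue] using congrFun (congrArg Subtype.val h) fun _ => false
  classical
  rw [Nat.card_eq_fintype_card, Nat.succ_le_iff, Fintype.one_lt_card_iff]
  exact ⟨_, _, hne⟩

theorem card_not_isSymmNondegenerate_le :
    Nat.card {g : (ι → Bool) → Bool // ¬ IsSymmNondegenerate g} ≤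
      2 ^ 2 ^ Nat.card ι - 2 := by
  classical
  have := two_le_card_isSymmNondegenerate (ι := ι)
  simp only [Nat.card_eq_fintype_card] at this ⊢
  rw [Fintype.card_subtype_compl, Fintype.card_fun, Fintype.card_fun, Fintype.card_bool]
  omega

end BooleanFunction

section Restriction

variable {n : ℕ}

theorem restrictSet_eq_of_eqOn (f : (Fin n → Bool) → Bool) {I : Finset (Fin n)}
    {ρ x : Fin n → Bool} (h : ∀ j ∈ I, ρ j = x j) :
    restrictSet f I ρ (fun j => x j) = f x := by
  refine congrArg f (funext fun j => ?_)
  by_cases hj : j ∈ I <;> simp [hj, h]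

theorem card_forall_restrictSet_le (I : Finset (Fin n))
    (P : (({j : Fin n // j ∉ I} → Bool) → Bool) → Prop) :
    Nat.card {f : (Fin n → Bool) → Bool // ∀ ρ, P (restrictSet f I ρ)} ≤
      Nat.card {g // P g} ^ 2 ^ I.card := by
  let extend (a : {j // j ∈ I} → Bool) : Fin n → Bool :=
    fun j => if h : j ∈ I then a ⟨j, h⟩ else false
  let F (f : {f : (Fin n → Bool) → Bool // ∀ ρ, P (restrictSet f I ρ)}) :
      ({j // j ∈ I} → Bool) → {g // P g} := fun a => ⟨restrictSet f I (extend a), f.2 _⟩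
  have hF : Function.Injective F := by
    intro f f' h
    ext x
    have hx : ∀ j ∈ I, extend (fun j => x j) j = x j := fun j hj => by simp [extend, hj]
    have : restrictSet f I (extend fun j => x j) (fun j => x j) =
        restrictSet f' I (extend fun j => x j) (fun j => x j) :=
      congrFun (congrArg Subtype.val (congrFun h fun j => x j)) fun j => x j
    rwa [restrictSet_eq_of_eqOn _ hx, restrictSet_eq_of_eqOn _ hx] at this
  simpa [Nat.card_fun] using Nat.card_le_card_of_injective F hF

theorem card_not_hasGoodRestriction_le (n : ℕ) :
    Nat.card {f : (Fin n → Bool) → Bool // ¬ HasGoodRestriction n f} ≤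
      (2 ^ 2 ^ (Nat.log 2 n - 1) - 2) ^ 2 ^ (n - (Nat.log 2 n - 1)) := by
  set k := Nat.log 2 n - 1
  have hkn : k ≤ n := (Nat.sub_le _ 1).trans (Nat.log_le_self 2 n)
  obtain ⟨I, -, hI⟩ := Finset.exists_subset_card_eq (s := (Finset.univ : Finset (Fin n)))
    (n := n - k) (by simp)
  have hcompl : (Finset.univ \ I).card = k := by
    rw [Finset.card_univ_sdiff, Fintype.card_fin, hI]; omega
  have hfree : Nat.card {j // j ∉ I} = k := by
    rw [Nat.card_eq_fintype_card, Fintype.card_subtype_compl, Fintype.card_coe,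
      Fintype.card_fin, hI]
    omega
  calc Nat.card {f : (Fin n → Bool) → Bool // ¬ HasGoodRestriction n f}
      ≤ Nat.card {f : (Fin n → Bool) → Bool //
          ∀ ρ, ¬ IsSymmNondegenerate (restrictSet f I ρ)} :=
        Nat.card_mono (Set.toFinite _) fun f hf ρ hρ => hf ⟨I, ρ, hcompl, hρ⟩
    _ ≤ Nat.card {g // ¬ IsSymmNondegenerate g} ^ 2 ^ I.card :=
        card_forall_restrictSet_le I fun g => ¬ IsSymmNondegenerate g
    _ ≤ (2 ^ 2 ^ k - 2) ^ 2 ^ (n - k) := by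
        rw [hI, ← hfree]
        exact Nat.pow_le_pow_left card_not_isSymmNondegenerate_le _

end Restriction

theorem card_hasGoodRestriction_add_card_not (n : ℕ) :
    Nat.card {f : (Fin n → Bool) → Bool // HasGoodRestriction n f} +
      Nat.card {f : (Fin n → Bool) → Bool // ¬ HasGoodRestriction n f} = 2 ^ 2 ^ n := by
  classical
  simp only [Nat.card_eq_fintype_card]
  rw [Fintype.card_subtype_compl, Nat.add_sub_cancel' (Fintype.card_subtype_le _),
    Fintype.card_fun, Fintype.card_fun, Fintype.card_bool, Fintype.card_fin]

section Asymptotics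

open Real

theorem Nat.two_mul_le_two_pow (k : ℕ) : 2 * k ≤ 2 ^ k := by
  rcases k with _ | k
  · simp
  · have := Nat.lt_two_pow_self (n := k)
    rw [pow_succ]
    omega

theorem two_pow_add_two_mul_log_sub_one_le {n : ℕ} (hn : n ≠ 0) :
    2 ^ (Nat.log 2 n - 1) + 2 * (Nat.log 2 n - 1) ≤ n := by
  have hpow := Nat.pow_log_le_self 2 hn
  rcases h : Nat.log 2 n with _ | k
  · omega
  · rw [h, pow_succ] at hpow
    have := Nat.two_mul_le_two_pow k
    simp only [add_tsub_cancel_right]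
    omega

theorem tendsto_log_two_sub_one : Tendsto (fun n => Nat.log 2 n - 1) atTop atTop :=
  tendsto_atTop_atTop.2 fun b =>
    ⟨2 ^ (b + 1), fun n hn => by have := Nat.le_log_of_pow_le one_lt_two hn; omega⟩

theorem one_sub_two_div_pow_le_exp_neg_two_pow {A : ℕ} (hA : 2 ≤ A) (e : ℕ) :
    (1 - 2 / A : ℝ) ^ (A * 2 ^ e) ≤ exp (-2) ^ e := by
  have hA' : (2 : ℝ) ≤ A := by exact_mod_cast hA
  have h0 : (0 : ℝ) ≤ 1 - 2 / A := by
    rw [sub_nonneg, div_le_one (by linarith)]; exact hA'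
  calc (1 - 2 / A : ℝ) ^ (A * 2 ^ e) = ((1 - 2 / A) ^ A) ^ 2 ^ e := pow_mul _ _ _
    _ ≤ exp (-2) ^ 2 ^ e :=
        pow_le_pow_left₀ (pow_nonneg h0 _) (one_sub_div_pow_le_exp_neg hA') _
    _ ≤ exp (-2) ^ e :=
        pow_le_pow_of_le_one (exp_nonneg _) (exp_le_one_iff.2 (by norm_num)) Nat.lt_two_pow_self.le

theorem two_pow_two_pow_sub_two_pow_div_le {k n : ℕ} (h : 2 ^ k + 2 * k ≤ n) :
    (((2 ^ 2 ^ k - 2) ^ 2 ^ (n - k) : ℕ) : ℝ) / 2 ^ 2 ^ n ≤ exp (-2) ^ k := by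
  obtain ⟨e, rfl⟩ : ∃ e, n = k + (2 ^ k + (k + e)) := ⟨n - 2 ^ k - 2 * k, by omega⟩
  have hA : 2 ≤ 2 ^ 2 ^ k := Nat.le_self_pow (Nat.two_pow_pos k).ne' 2
  rw [Nat.add_sub_cancel_left, pow_add 2 k, pow_mul, pow_add 2 (2 ^ k),
    show (2 : ℝ) ^ 2 ^ k = ((2 ^ 2 ^ k : ℕ) : ℝ) by push_cast; rfl]
  generalize 2 ^ 2 ^ k = A at hA ⊢
  push_cast [Nat.cast_sub hA]
  rw [← div_pow, sub_div, div_self (by positivity)]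
  calc (1 - 2 / A : ℝ) ^ (A * 2 ^ (k + e)) ≤ exp (-2) ^ (k + e) :=
        one_sub_two_div_pow_le_exp_neg_two_pow hA _
    _ ≤ exp (-2) ^ k :=
        pow_le_pow_of_le_one (exp_nonneg _) (exp_le_one_iff.2 (by norm_num)) (Nat.le_add_right k e)

theorem card_not_hasGoodRestriction_div_le {n : ℕ} (hn : n ≠ 0) :
    (Nat.card {f : (Fin n → Bool) → Bool // ¬ HasGoodRestriction n f} : ℝ) / 2 ^ 2 ^ n ≤
      exp (-2) ^ (Nat.log 2 n - 1) :=
  le_trans (by gcongr; exact_mod_cast card_not_hasGoodRestriction_le n)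
    (two_pow_two_pow_sub_two_pow_div_le (two_pow_add_two_mul_log_sub_one_le hn))

end Asymptotics

/-- The fraction of Boolean functions `f : {0,1}^n → {0,1}` having a good restriction
(with `k = ⌊log₂ n⌋ - 1` free variables) tends to `1` as `n → ∞`. -/
theorem almost_all_have_good_restriction :
    Filter.Tendsto (fun n : ℕ =>
      (Nat.card {f : (Fin n → Bool) → Bool // HasGoodRestriction n f} : ℝ) / 2 ^ (2 ^ n))
      Filter.atTop (nhds 1) := by
  have hbad : Tendsto (fun n : ℕ =>
      (Nat.card {f : (Fin n → Bool) → Bool // ¬ HasGoodRestriction n f} : ℝ) / 2 ^ 2 ^ n)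
      atTop (𝓝 0) :=
    squeeze_zero' (Eventually.of_forall fun n => by positivity)
      ((eventually_ne_atTop 0).mono fun n hn => card_not_hasGoodRestriction_div_le hn)
      ((tendsto_pow_atTop_nhds_zero_of_lt_one (Real.exp_nonneg _)
        (Real.exp_lt_one_iff.2 (by norm_num))).comp tendsto_log_two_sub_one)
  have hsplit (n : ℕ) :
      (Nat.card {f : (Fin n → Bool) → Bool // HasGoodRestriction n f} : ℝ) / 2 ^ 2 ^ n =
        1 - (Nat.card {f : (Fin n → Bool) → Bool // ¬ HasGoodRestriction n f} : ℝ) /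
          2 ^ 2 ^ n := by
    rw [eq_sub_iff_add_eq, ← add_div, ← Nat.cast_add, card_hasGoodRestriction_add_card_not]
    push_cast
    exact div_self (by positivity)
  simpa [hsplit] using tendsto_const_nhds.sub hbad
end
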